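/- arXiv:1610.06115 — 2 statements merged into one kernel-verified Lean document; each statement's English description precedes it below -/
import Mathlib

section
/- Let π : Q̃ → Q be a minimal gradable covering of a connected locally finite quiver Q, where Q̃ is a connected component of Q^ℤ and π sends (a, n) to a. If x ∈ Q̃^m and y ∈ Q̃^n satisfy π(x) = π(y), then n ≡ m (mod r_Q), where r_Q is the grading period of Q. -/
/-!
Every walk in `Q^ℤ` from `(a, m)` to `(a, n)` projects to a closed walk at `a` in `Q` of degree
`n - m`. When `Q` is connected, the degrees of closed walks at a fixed vertex form a subgroup of `ℤ`
containing every closed-walk degree of `Q` (conjugate by a path). It is `0` if `Q` is gradable;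
otherwise its least positive element is `r_Q`, so it is `r_Q ℤ`, and `r_Q ∣ n - m`.
-/

universe u v

/-- A walk in a quiver: a sequence of forward or backward traversals of arrows. -/
inductive QWalk {V : Type u} [Quiver.{v} V] : V → V → Type (max u v) where
  | nil {a : V} : QWalk a a
  | fwd {a b c : V} (w : QWalk a b) (e : b ⟶ c) : QWalk a c
  | bwd {a b c : V} (w : QWalk a b) (e : c ⟶ b) : QWalk a c

namespace QWalk

/-- The degree of a walk: forward arrows count +1, backward arrows count -1. -/
def degree {V : Type u} [Quiver.{v} V] : {a b : V} → QWalk a b → ℤ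
  | _, _, nil => 0
  | _, _, fwd w _ => degree w + 1
  | _, _, bwd w _ => degree w - 1

end QWalk

/-- A quiver is gradable if any two walks between the same pair of vertices
have the same degree. -/
def QuiverGradable (V : Type u) [Quiver.{v} V] : Prop :=
  ∀ ⦃a b : V⦄ (w w' : QWalk a b), w.degree = w'.degree

/-- A quiver is locally finite if there are only finitely many arrows between
any two vertices and each vertex has finitely many neighbours. -/
def LocallyFiniteQuiver (V : Type u) [Quiver.{v} V] : Prop :=
  (∀ a b : V, Finite (a ⟶ b)) ∧
    ∀ a : V, {b : V | Nonempty (a ⟶ b) ∨ Nonempty (b ⟶ a)}.Finite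
/-- The quiver `Q^ℤ`: vertices are pairs `(a, i)` with `a` a vertex of `Q` and `i : ℤ`;
arrows `(α, i) : (a, i) → (b, i + 1)` for each arrow `α : a → b` of `Q`. -/
def ZQuiver (V : Type u) [Quiver.{v} V] : Quiver.{v} (V × ℤ) :=
  ⟨fun x y => (x.1 ⟶ y.1) × PLift (y.2 = x.2 + 1)⟩
/-- Two vertices of `Q^ℤ` lie in the same connected component iff there is a walk
between them. -/
def ZConn (V : Type u) [Quiver.{v} V] (x y : V × ℤ) : Prop :=
  Nonempty (@QWalk (V × ℤ) (ZQuiver V) x y)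

/-- `r` is the grading period of the quiver `Q`: it is `0` if `Q` is gradable, and
otherwise it is the minimal positive degree of a closed walk in `Q`. -/
def IsGradingPeriod (V : Type u) [Quiver.{v} V] (r : ℤ) : Prop :=
  (QuiverGradable V ∧ r = 0) ∨
    (¬ QuiverGradable V ∧ 0 < r ∧ (∃ (a : V) (w : QWalk a a), w.degree = r) ∧
      ∀ (a : V) (w : QWalk a a), 0 < w.degree → r ≤ w.degree)

namespace QWalk

variable {V : Type u} [Quiver.{v} V]

@[simp]
theorem degree_nil {a : V} : (nil : QWalk a a).degree = 0 := by
  rw [degree]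

@[simp]
theorem degree_fwd {a b c : V} (w : QWalk a b) (e : b ⟶ c) :
    (fwd w e).degree = w.degree + 1 := by
  rw [degree]

@[simp]
theorem degree_bwd {a b c : V} (w : QWalk a b) (e : c ⟶ b) :
    (bwd w e).degree = w.degree - 1 := by
  rw [degree]

def comp : {a b c : V} → QWalk a b → QWalk b c → QWalk a c
  | _, _, _, w, nil => w
  | _, _, _, w, fwd v e => fwd (comp w v) e
  | _, _, _, w, bwd v e => bwd (comp w v) e

@[simp]
theorem degree_comp {a b c : V} (w : QWalk a b) (v : QWalk b c) :
    (w.comp v).degree = w.degree + v.degree := by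
  induction v with
  | nil => simp [comp]
  | fwd v e ih => simp only [comp, degree_fwd, ih]; ring
  | bwd v e ih => simp only [comp, degree_bwd, ih]; ring

def reverse : {a b : V} → QWalk a b → QWalk b a
  | _, _, nil => nil
  | _, _, fwd w e => comp (bwd nil e) (reverse w)
  | _, _, bwd w e => comp (fwd nil e) (reverse w)

@[simp]
theorem degree_reverse {a b : V} (w : QWalk a b) : w.reverse.degree = -w.degree := by
  induction w with
  | nil => simp [reverse]
  | fwd w e ih => simp [reverse, ih]
  | bwd w e ih => simp [reverse, ih]; ring

def closedDegrees (a : V) : AddSubgroup ℤ where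
  carrier := {d | ∃ w : QWalk a a, w.degree = d}
  zero_mem' := ⟨nil, degree_nil⟩
  add_mem' := by
    rintro _ _ ⟨w, rfl⟩ ⟨w', rfl⟩
    exact ⟨w.comp w', degree_comp w w'⟩
  neg_mem' := by
    rintro _ ⟨w, rfl⟩
    exact ⟨w.reverse, degree_reverse w⟩

theorem mem_closedDegrees {a : V} {d : ℤ} : d ∈ closedDegrees a ↔ ∃ w : QWalk a a, w.degree = d :=
  Iff.rfl

theorem degree_mem_closedDegrees {a : V} (w : QWalk a a) : w.degree ∈ closedDegrees a :=
  ⟨w, rfl⟩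

theorem degree_mem_closedDegrees_of_walk {a b : V} (p : QWalk a b) (w : QWalk b b) :
    w.degree ∈ closedDegrees a :=
  ⟨p.comp (w.comp p.reverse), by simp⟩

theorem closedDegrees_eq_bot_of_gradable (hg : QuiverGradable V) (a : V) :
    closedDegrees a = ⊥ := by
  refine (AddSubgroup.eq_bot_iff_forall _).2 ?_
  intro d hd
  obtain ⟨w, rfl⟩ := mem_closedDegrees.1 hd
  simpa using hg w nil

theorem closedDegrees_eq_zmultiples (hconn : ∀ a b : V, Nonempty (QWalk a b)) {r : ℤ}
    (hr : IsGradingPeriod V r) (a : V) : closedDegrees a = AddSubgroup.zmultiples r := by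
  rcases hr with ⟨hg, rfl⟩ | ⟨-, hr_pos, ⟨b, w, rfl⟩, hmin⟩
  · simp [closedDegrees_eq_bot_of_gradable hg]
  · rw [AddSubgroup.zmultiples_eq_closure]
    refine AddSubgroup.cyclic_of_min ⟨⟨?_, hr_pos⟩, ?_⟩
    · exact degree_mem_closedDegrees_of_walk (hconn a b).some w
    · rintro _ ⟨hd, hd_pos⟩
      obtain ⟨v, rfl⟩ := mem_closedDegrees.1 hd
      exact hmin a v hd_pos

theorem gradingPeriod_dvd_degree (hconn : ∀ a b : V, Nonempty (QWalk a b)) {r : ℤ}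
    (hr : IsGradingPeriod V r) {a : V} (w : QWalk a a) : r ∣ w.degree := by
  rw [← Int.mem_zmultiples_iff, ← closedDegrees_eq_zmultiples hconn hr]
  exact degree_mem_closedDegrees w

end QWalk

namespace ZQuiver

variable {V : Type u} [Quiver.{v} V]

attribute [local instance] ZQuiver

/-- The image of a walk of `Q^ℤ` under the covering `(a, n) ↦ a`. -/
def projWalk : {x y : V × ℤ} → QWalk x y → QWalk x.1 y.1
  | _, _, .nil => .nil
  | _, _, .fwd w e => .fwd (projWalk w) e.1
  | _, _, .bwd w e => .bwd (projWalk w) e.1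

theorem degree_projWalk {x y : V × ℤ} (w : QWalk x y) :
    (projWalk w).degree = y.2 - x.2 := by
  induction w with
  | nil => simp [projWalk]
  | fwd w e ih => simp only [projWalk, QWalk.degree_fwd, ih]; have := e.2.down; omega
  | bwd w e ih => simp only [projWalk, QWalk.degree_bwd, ih]; have := e.2.down; omega

end ZQuiver

theorem cover_same_fibre_mod_period_general (V : Type u) [Quiver.{v} V]
    (hconn : ∀ a b : V, Nonempty (QWalk a b))
    {r : ℤ} (hr : IsGradingPeriod V r)
    (x y : V × ℤ) (hxy : ZConn V x y) (hpi : x.1 = y.1) :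
    y.2 ≡ x.2 [ZMOD r] := by
  obtain ⟨a, m⟩ := x
  obtain ⟨b, n⟩ := y
  obtain rfl : a = b := hpi
  obtain ⟨w⟩ := hxy
  have hdvd := QWalk.gradingPeriod_dvd_degree hconn hr (ZQuiver.projWalk (x := (a, m)) (y := (a, n)) w)
  rw [ZQuiver.degree_projWalk] at hdvd
  exact Int.modEq_iff_dvd.2 (dvd_sub_comm.1 hdvd)

/-- Let `π : Q̃ → Q` be a minimal gradable covering of a connected
locally finite quiver `Q` (so `Q̃` is a connected component of `Q^ℤ`, graded by
`Q̃^n = Q̃ ∩ (Q_0 × {n})`, and `π(a, n) = a`).  If `x ∈ Q̃^m` and `y ∈ Q̃^n` with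
`π(x) = π(y)`, then `n ≡ m (mod r_Q)`. -/
theorem cover_same_fibre_mod_period (V : Type u) [Quiver.{v} V]
    (hconn : ∀ a b : V, Nonempty (QWalk a b)) (hlf : LocallyFiniteQuiver V)
    {r : ℤ} (hr : IsGradingPeriod V r)
    (x y : V × ℤ) (hxy : ZConn V x y) (hpi : x.1 = y.1) :
    y.2 ≡ x.2 [ZMOD r] :=
  cover_same_fibre_mod_period_general V hconn hr x y hxy hpi
end

section
/- Let Λ be a locally bounded k-category with nilpotent radical. A radical bounded-above complex X• of finitely supported projective Λ-modules with bounded homology is indecomposable in the category of complexes if and only if its image in the homotopy category K^{-,b}(Proj Λ) is indecomposable. -/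
open CategoryTheory Limits

/-- A morphism `f : X ⟶ Y` in a preadditive category lies in the (Jacobson)
radical if for every `g : Y ⟶ X` the endomorphism `𝟙 X - f ≫ g` is invertible. -/
def catRad {C : Type*} [Category C] [Preadditive C] {X Y : C} (f : X ⟶ Y) : Prop :=
  ∀ g : Y ⟶ X, IsIso (𝟙 X - f ≫ g)

/-- The composite of a chain of `n` composable morphisms. -/
def chainComp {C : Type*} [Category C] (X : ℕ → C) (f : ∀ i, X i ⟶ X (i + 1)) :
    ∀ n : ℕ, X 0 ⟶ X n
  | 0 => 𝟙 _
  | n + 1 => chainComp X f n ≫ f n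

/-- The radical of the category `C` is nilpotent: there is `n` such that every
composite of `n` radical morphisms vanishes. -/
def RadNilpotent (C : Type*) [Category C] [Preadditive C] : Prop :=
  ∃ n : ℕ, ∀ (X : ℕ → C) (f : ∀ i, X i ⟶ X (i + 1)),
    (∀ i, catRad (f i)) → chainComp X f n = 0

section

variable {C A : Type*} [Category C] [Preadditive C] [Category A] [Abelian A]

/-- A complex is radical if all its differentials are radical morphisms. -/
def RadicalCx (X : CochainComplex C ℤ) : Prop := ∀ n : ℤ, catRad (X.d n (n + 1))

/-- A complex is bounded above. -/
def CxBddAbove (X : CochainComplex C ℤ) : Prop := ∃ N : ℤ, ∀ n ≥ N, IsZero (X.X n)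

/-- A bounded-above complex over `C ⊆ A` has bounded homology, computed in the
ambient abelian category `A` via the inclusion `ι`. -/
def CxBddHomology (ι : C ⥤ A) [ι.Additive] (X : CochainComplex C ℤ) : Prop :=
  ∃ s : ℤ, ∀ n ≤ s, ((ι.mapHomologicalComplex (ComplexShape.up ℤ)).obj X).ExactAt n

end

/-- An object of an additive category is indecomposable: it is nonzero and its
only idempotent endomorphisms are `0` and the identity. -/
def IndecObj {D : Type*} [Category D] [Preadditive D] (X : D) : Prop :=
  ¬ Limits.IsZero X ∧ ∀ f : X ⟶ X, f ≫ f = f → f = 0 ∨ f = 𝟙 X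

/-!
The quotient functor `Q` from complexes to the homotopy category is full, so
`End X → End (Q X)` is a surjective ring map whose kernel consists of the null-homotopic
endomorphisms. Each component `d h + h d` of a null-homotopic endomorphism of a radical complex
is radical, so by nilpotency of the radical (with a bound independent of the degree) the whole
endomorphism is nilpotent. Modulo a nil ideal idempotents lift and nonzero rings stay nonzero,
so `End X` and `End (Q X)` are simultaneously nonzero with only the trivial idempotents.
-/

section Radical

variable {C : Type*} [Category C] [Preadditive C]

lemma isIso_id_sub_comp_swap {X Y : C} (a : X ⟶ Y) (b : Y ⟶ X) [IsIso (𝟙 X - a ≫ b)] :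
    IsIso (𝟙 Y - b ≫ a) := by
  refine ⟨𝟙 Y + b ≫ inv (𝟙 X - a ≫ b) ≫ a, ?_, ?_⟩
  · calc (𝟙 Y - b ≫ a) ≫ (𝟙 Y + b ≫ inv (𝟙 X - a ≫ b) ≫ a)
        = 𝟙 Y - b ≫ a + b ≫ ((𝟙 X - a ≫ b) ≫ inv (𝟙 X - a ≫ b)) ≫ a := by
          simp only [Preadditive.sub_comp, Preadditive.comp_add, Preadditive.comp_sub,
            Category.id_comp, Category.comp_id, Category.assoc]
      _ = 𝟙 Y := by rw [IsIso.hom_inv_id]; simp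
  · calc (𝟙 Y + b ≫ inv (𝟙 X - a ≫ b) ≫ a) ≫ (𝟙 Y - b ≫ a)
        = 𝟙 Y - b ≫ a + b ≫ (inv (𝟙 X - a ≫ b) ≫ (𝟙 X - a ≫ b)) ≫ a := by
          simp only [Preadditive.sub_comp, Preadditive.add_comp, Preadditive.comp_sub,
            Category.id_comp, Category.comp_id, Category.assoc]
          abel
      _ = 𝟙 Y := by rw [IsIso.inv_hom_id]; simp

lemma catRad_comp_right {X Y Z : C} {f : X ⟶ Y} (hf : catRad f) (v : Y ⟶ Z) :
    catRad (f ≫ v) := fun g => by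
  rw [Category.assoc]
  exact hf (v ≫ g)

lemma catRad_comp_left {X Y Z : C} {f : X ⟶ Y} (hf : catRad f) (u : Z ⟶ X) :
    catRad (u ≫ f) := fun g => by
  have : IsIso (𝟙 X - (f ≫ g) ≫ u) := by
    rw [Category.assoc]
    exact hf (g ≫ u)
  simpa only [Category.assoc] using isIso_id_sub_comp_swap (f ≫ g) u

lemma catRad_add {X Y : C} {f g : X ⟶ Y} (hf : catRad f) (hg : catRad g) :
    catRad (f + g) := fun h => by
  have : IsIso (𝟙 X - f ≫ h) := hf h
  have : IsIso (𝟙 X - g ≫ h ≫ inv (𝟙 X - f ≫ h)) := hg _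
  have key : 𝟙 X - (f + g) ≫ h
      = (𝟙 X - g ≫ h ≫ inv (𝟙 X - f ≫ h)) ≫ (𝟙 X - f ≫ h) := by
    simp only [Preadditive.sub_comp, Preadditive.add_comp, Category.id_comp,
      Category.assoc, IsIso.inv_hom_id, Category.comp_id]
    abel
  rw [key]
  infer_instance

omit [Preadditive C] in
lemma chainComp_const_eq_pow {Y : C} (f : End Y) (n : ℕ) :
    chainComp (fun _ => Y) (fun _ => f) n = f ^ n := by
  induction n with
  | zero => rfl
  | succ n ih => rw [pow_succ', End.mul_def, ← ih]; rfl

lemma RadNilpotent.exists_pow_eq_zero (hnil : RadNilpotent C) :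
    ∃ n : ℕ, ∀ {Y : C} (f : End Y), catRad f → f ^ n = 0 := by
  obtain ⟨n, hn⟩ := hnil
  exact ⟨n, fun f hf => by rw [← chainComp_const_eq_pow]; exact hn _ _ fun _ => hf⟩

end Radical

section RadicalComplex

variable {C : Type*} [Category C] [Preadditive C]

lemma RadicalCx.catRad_f_of_homotopy_zero {X : CochainComplex C ℤ} (hX : RadicalCx X)
    {f : X ⟶ X} (h : Homotopy f 0) (i : ℤ) : catRad (f.f i) := by
  have hd : catRad (X.d (i - 1) i) := by
    have := hX (i - 1)
    rwa [sub_add_cancel] at this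
  have hf : f.f i = X.d i (i + 1) ≫ h.hom (i + 1) i + h.hom i (i - 1) ≫ X.d (i - 1) i := by
    simpa [dNext_eq h.hom (show (ComplexShape.up ℤ).Rel i (i + 1) by simp),
      prevD_eq h.hom (show (ComplexShape.up ℤ).Rel (i - 1) i by simp)] using h.comm i
  rw [hf]
  exact catRad_add (catRad_comp_right (hX i) _) (catRad_comp_left hd _)

lemma RadicalCx.isNilpotent_of_homotopy_zero (hnil : RadNilpotent C)
    {X : CochainComplex C ℤ} (hX : RadicalCx X) {f : End X} (h : Homotopy f 0) :
    IsNilpotent f := by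
  obtain ⟨n, hn⟩ := hnil.exists_pow_eq_zero
  refine ⟨n, HomologicalComplex.hom_ext _ _ fun i => ?_⟩
  change (HomologicalComplex.eval C _ i).mapEnd X (f ^ n) = 0
  rw [map_pow]
  exact hn _ (hX.catRad_f_of_homotopy_zero h i)

end RadicalComplex

section NilKernel

variable {R S : Type*} [Ring R] [Ring S] {φ : R →+* S}

lemma nontrivial_iff_of_ker_isNilpotent (hker : ∀ x ∈ RingHom.ker φ, IsNilpotent x) :
    Nontrivial R ↔ Nontrivial S := by
  refine ⟨fun _ => ?_, fun _ => φ.domain_nontrivial⟩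
  by_contra hS
  rw [not_nontrivial_iff_subsingleton] at hS
  exact not_isNilpotent_one (hker 1 (Subsingleton.elim _ _))

lemma forall_isIdempotentElem_iff_of_ker_isNilpotent (hφ : Function.Surjective φ)
    (hker : ∀ x ∈ RingHom.ker φ, IsNilpotent x) :
    (∀ e : R, IsIdempotentElem e → e = 0 ∨ e = 1) ↔
      ∀ e : S, IsIdempotentElem e → e = 0 ∨ e = 1 := by
  constructor
  · intro hR e he
    obtain ⟨e', he', rfl⟩ :=
      exists_isIdempotentElem_eq_of_ker_isNilpotent φ hker e (hφ e) he
    rcases hR e' he' with rfl | rfl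
    exacts [.inl (map_zero φ), .inr (map_one φ)]
  · intro hS e he
    rcases hS (φ e) (he.map φ) with h0 | h1
    · exact .inl (he.eq_zero_of_isNilpotent (hker e h0))
    · have : 1 - e ∈ RingHom.ker φ := by rw [RingHom.mem_ker, map_sub, map_one, h1, sub_self]
      exact .inr (sub_eq_zero.mp (he.one_sub.eq_zero_of_isNilpotent (hker _ this))).symm

end NilKernel

lemma indecObj_iff_end {D : Type*} [Category D] [Preadditive D] (X : D) :
    IndecObj X ↔ Nontrivial (End X) ∧ ∀ e : End X, IsIdempotentElem e → e = 0 ∨ e = 1 := by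
  rw [IndecObj, IsZero.iff_id_eq_zero]
  exact and_congr
    ⟨fun h => nontrivial_of_ne (1 : End X) 0 h, fun _ => (one_ne_zero : (1 : End X) ≠ 0)⟩
    Iff.rfl

def CategoryTheory.Functor.mapEndRingHom {D E : Type*} [Category D] [Preadditive D]
    [Category E] [Preadditive E] (F : D ⥤ E) [F.Additive] (X : D) : End X →+* End (F.obj X) where
  __ := F.mapEnd X
  map_zero' := F.map_zero X X
  map_add' _ _ := F.map_add

lemma indecObj_iff_of_full {D E : Type*} [Category D] [Preadditive D] [Category E]
    [Preadditive E] (F : D ⥤ E) [F.Additive] [F.Full] {X : D}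
    (hF : ∀ f : End X, F.map f = 0 → IsNilpotent f) : IndecObj X ↔ IndecObj (F.obj X) := by
  have hsurj : Function.Surjective (F.mapEndRingHom X) := F.map_surjective
  have hker : ∀ f ∈ RingHom.ker (F.mapEndRingHom X), IsNilpotent f := hF
  rw [indecObj_iff_end, indecObj_iff_end, nontrivial_iff_of_ker_isNilpotent hker,
    forall_isIdempotentElem_iff_of_ker_isNilpotent hsurj hker]

theorem radical_complex_indecomposable_iff_general
    {C : Type*} [Category C] [Preadditive C]
    (hnil : RadNilpotent C)
    (X : CochainComplex C ℤ) (h1 : RadicalCx X) :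
    IndecObj X ↔
      IndecObj ((HomotopyCategory.quotient C (ComplexShape.up ℤ)).obj X) :=
  indecObj_iff_of_full _ fun f hf => h1.isNilpotent_of_homotopy_zero hnil
    (HomotopyCategory.homotopyOfEq f 0 (by rw [hf, Functor.map_zero]))

/-- Let `Λ` be a locally bounded `k`-category with nilpotent radical,
`C = Proj Λ` embedded via `ι` in the abelian category `A = Mod^b Λ`.  A radical
bounded-above complex `X` of finitely supported projective `Λ`-modules with bounded
homology is indecomposable in the category of complexes if and only if its image in
the homotopy category `K^{-,b}(Proj Λ)` is indecomposable. -/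
theorem radical_complex_indecomposable_iff
    (k : Type*) [Field k] {C A : Type*} [Category C] [Preadditive C]
    [CategoryTheory.Linear k C] [Category A] [Abelian A] [CategoryTheory.Linear k A]
    (ι : C ⥤ A) [ι.Additive] [ι.Full] [ι.Faithful]
    (hproj : ∀ X : C, CategoryTheory.Projective (ι.obj X))
    (hfin : ∀ X Y : C, FiniteDimensional k (X ⟶ Y))
    (hnil : RadNilpotent C)
    (X : CochainComplex C ℤ) (h1 : RadicalCx X) (h2 : CxBddAbove X)
    (h3 : CxBddHomology ι X) :
    IndecObj X ↔
      IndecObj ((HomotopyCategory.quotient C (ComplexShape.up ℤ)).obj X) :=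
  radical_complex_indecomposable_iff_general hnil X h1
end
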